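/- Every ring isomorphism between two p-adic fields is automatically a homeomorphism: if E and E' are finite extensions of ℚ_p, each equipped with the topology induced by its unique norm extending the p-adic norm of ℚ_p (with respect to which it is complete), then any ring isomorphism φ : E → E' is continuous (and hence a homeomorphism). In particular, a ring isomorphism of p-adic fields is an isomorphism of topological (equivalently, valued) fields. -/

import Mathlib

/-!
A ring homomorphism `ψ : ℚ_p → K` into a finite extension `K` of `ℚ_p` is an isometry. Indeed, a
principal unit `v ∈ 1 + pℤ_p` has `m`-th roots for every `m` prime to `p` (Hensel), so `ψ v` has
roots of arbitrarily large order. But `K` is proper and ultrametric, so spheres are open and the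
norms of `K` in any compact annulus `r ≤ ‖x‖ ≤ R` with `r > 0` form a finite set, whereas the
roots of `ψ v` or of `(ψ v)⁻¹` would have infinitely many norms in `(1, ‖ψ v‖ ^ (±1)]` if
`‖ψ v‖ ≠ 1`. Every unit `u` of `ℤ_p` has `u ^ (p - 1)` a principal unit, and
`ψ p = p`, which settles all of `ℚ_p`. Consequently a ring homomorphism `φ : E → E'` of finite
extensions is semilinear over an isometry of `ℚ_p`, hence continuous, as `E` is finite-dimensional.
-/

open Metric Filter

section Ultrametric

variable {K : Type*}

theorem IsCompact.finite_norm_image [NormedAddCommGroup K] [IsUltrametricDist K] {s : Set K}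
    (hs : IsCompact s) (h0 : (0 : K) ∉ s) : (norm '' s).Finite := by
  have hcover : s ⊆ ⋃ x ∈ s, sphere (0 : K) ‖x‖ := fun x hx =>
    Set.mem_biUnion hx (mem_sphere_zero_iff_norm.2 rfl)
  obtain ⟨t, -, ht, hst⟩ := hs.elim_finite_subcover_image (fun x hx =>
    IsUltrametricDist.isOpen_sphere 0 (norm_ne_zero_iff.2 (ne_of_mem_of_not_mem hx h0))) hcover
  refine (ht.image norm).subset ?_
  rintro _ ⟨x, hx, rfl⟩
  obtain ⟨y, hy, hxy⟩ := Set.mem_iUnion₂.1 (hst hx)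
  exact ⟨y, hy, (mem_sphere_zero_iff_norm.1 hxy).symm⟩

variable [NormedField K] [IsUltrametricDist K] [ProperSpace K]

theorem not_one_lt_norm_of_frequently_exists_pow_eq {y : K}
    (h : ∃ᶠ m in atTop, ∃ z : K, z ^ m = y) : ¬ 1 < ‖y‖ := by
  intro hy
  have hfin : (norm '' (closedBall (0 : K) ‖y‖ \ ball 0 1) ∩ Set.Ioi 1).Finite :=
    ((isCompact_closedBall 0 _).diff isOpen_ball).finite_norm_image (by simp) |>.inter_of_left _
  obtain ⟨c, ⟨-, hc1⟩, hc⟩ := Set.exists_min_image _ id hfin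
    ⟨‖y‖, ⟨y, by simp [hy.le], rfl⟩, hy⟩
  obtain ⟨n, hn⟩ := pow_unbounded_of_one_lt ‖y‖ hc1
  obtain ⟨m, hmn, z, rfl⟩ := frequently_atTop.1 h n
  have hm : m ≠ 0 := by rintro rfl; simp at hy
  rw [norm_pow] at hy hn hc
  have hz : 1 < ‖z‖ := (one_lt_pow_iff_of_nonneg (norm_nonneg z) hm).1 hy
  have hcz : c ≤ ‖z‖ := hc _ ⟨⟨z, by simp [hz.le, le_self_pow₀ hz.le hm], rfl⟩, hz⟩
  refine lt_irrefl (‖z‖ ^ m) ?_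
  calc ‖z‖ ^ m < c ^ n := hn
    _ ≤ c ^ m := pow_le_pow_right₀ hc1.le hmn
    _ ≤ ‖z‖ ^ m := pow_le_pow_left₀ (by linarith [hc1.out]) hcz m

theorem norm_eq_one_of_frequently_exists_pow_eq {y : K} (hy : y ≠ 0)
    (h : ∃ᶠ m in atTop, ∃ z : K, z ^ m = y) : ‖y‖ = 1 := by
  have hinv : ∃ᶠ m in atTop, ∃ z : K, z ^ m = y⁻¹ :=
    h.mono fun m ⟨z, hz⟩ => ⟨z⁻¹, by rw [inv_pow, hz]⟩
  have hle := not_lt.1 (not_one_lt_norm_of_frequently_exists_pow_eq h)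
  have hge := not_lt.1 (not_one_lt_norm_of_frequently_exists_pow_eq hinv)
  rw [norm_inv] at hge
  exact le_antisymm hle ((inv_le_one₀ (norm_pos_iff.2 hy)).1 hge)

end Ultrametric

namespace PadicInt

variable {p : ℕ} [Fact p.Prime]

theorem exists_pow_eq_of_norm_sub_one_lt {v : ℤ_[p]} (hv : ‖v - 1‖ < 1) {m : ℕ} (hm : ¬p ∣ m) :
    ∃ w : ℤ_[p], w ^ m = v := by
  have hnorm : ‖(Polynomial.X ^ m - Polynomial.C v).aeval (1 : ℤ_[p])‖ <
      ‖(Polynomial.X ^ m - Polynomial.C v).derivative.aeval (1 : ℤ_[p])‖ ^ 2 := by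
    have hm1 : ‖(m : ℤ_[p])‖ = 1 :=
      norm_natCast_eq_one_iff.2 ((Nat.Prime.coprime_iff_not_dvd Fact.out).2 hm)
    simpa [norm_sub_rev, Polynomial.derivative_X_pow, hm1] using hv
  obtain ⟨w, hw, -⟩ := hensels_lemma hnorm
  exact ⟨w, by simpa [sub_eq_zero] using hw⟩

theorem norm_lt_one_iff_toZMod_eq_zero {x : ℤ_[p]} : ‖x‖ < 1 ↔ toZMod x = 0 := by
  rw [← RingHom.mem_ker, ker_toZMod, IsLocalRing.mem_maximalIdeal, mem_nonunits]

theorem norm_pow_sub_one_sub_one_lt_one {u : ℤ_[p]} (hu : IsUnit u) : ‖u ^ (p - 1) - 1‖ < 1 := by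
  have hu0 : toZMod u ≠ 0 := by
    rw [Ne, ← norm_lt_one_iff_toZMod_eq_zero, isUnit_iff.1 hu]
    exact lt_irrefl 1
  rw [norm_lt_one_iff_toZMod_eq_zero, map_sub, map_pow, map_one,
    ZMod.pow_card_sub_one_eq_one hu0, sub_self]

end PadicInt

section RingHom

variable {p : ℕ} [Fact p.Prime] {K : Type*} [NormedField K] [IsUltrametricDist K] [ProperSpace K]

theorem PadicInt.norm_map_eq_one_of_norm_sub_one_lt (ψ : ℤ_[p] →+* K) {v : ℤ_[p]}
    (hv : ‖v - 1‖ < 1) : ‖ψ v‖ = 1 := by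
  have hunit : IsUnit (ψ v) := by
    refine (PadicInt.isUnit_iff.2 ?_).map ψ
    simpa [max_eq_right hv.le] using
      IsUltrametricDist.norm_add_eq_max_of_norm_ne_norm (x := v - 1) (y := 1) (by simpa using hv.ne)
  refine norm_eq_one_of_frequently_exists_pow_eq hunit.ne_zero (frequently_atTop.2 fun n => ?_)
  have hcop : ¬p ∣ p * n + 1 := fun h =>
    (Fact.out : p.Prime).one_lt.ne' (Nat.dvd_one.1 ((Nat.dvd_add_right (dvd_mul_right p n)).1 h))
  obtain ⟨w, hw⟩ := PadicInt.exists_pow_eq_of_norm_sub_one_lt hv hcop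
  exact ⟨p * n + 1, by nlinarith [(Fact.out : p.Prime).one_lt], ψ w, by rw [← map_pow, hw]⟩

theorem PadicInt.norm_map_eq_one_of_isUnit (ψ : ℤ_[p] →+* K) {u : ℤ_[p]} (hu : IsUnit u) :
    ‖ψ u‖ = 1 := by
  have h := norm_map_eq_one_of_norm_sub_one_lt ψ (norm_pow_sub_one_sub_one_lt_one hu)
  rwa [map_pow, norm_pow, pow_eq_one_iff_of_nonneg (norm_nonneg _)
    (Nat.sub_ne_zero_of_lt (Fact.out : p.Prime).one_lt)] at h

theorem Padic.norm_ringHom_apply (ψ : ℚ_[p] →+* K) (hp : ‖(p : K)‖ = ‖(p : ℚ_[p])‖) (x : ℚ_[p]) :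
    ‖ψ x‖ = ‖x‖ := by
  rcases eq_or_ne x 0 with rfl | hx
  · simp
  set n := x.valuation
  have hpn : (p : ℚ_[p]) ^ n ≠ 0 := zpow_ne_zero _ (Nat.cast_ne_zero.2 (Fact.out : p.Prime).ne_zero)
  have hu : ‖x / (p : ℚ_[p]) ^ n‖ = 1 := by
    rw [norm_div, div_eq_one_iff_eq (norm_ne_zero_iff.2 hpn), norm_zpow, Padic.norm_p,
      Padic.norm_eq_zpow_neg_valuation hx, inv_zpow, zpow_neg]
  have hψu : ‖ψ (x / (p : ℚ_[p]) ^ n)‖ = 1 :=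
    PadicInt.norm_map_eq_one_of_isUnit (ψ.comp PadicInt.Coe.ringHom)
      (u := ⟨_, hu.le⟩) (PadicInt.isUnit_iff.2 hu)
  calc ‖ψ x‖ = ‖ψ (x / (p : ℚ_[p]) ^ n)‖ * ‖ψ p‖ ^ n := by
        rw [← norm_zpow, ← norm_mul, ← map_zpow₀, ← map_mul, div_mul_cancel₀ _ hpn]
    _ = ‖x / (p : ℚ_[p]) ^ n‖ * ‖(p : ℚ_[p])‖ ^ n := by rw [hψu, hu, map_natCast, hp]
    _ = ‖x‖ := by rw [← norm_zpow, ← norm_mul, div_mul_cancel₀ _ hpn]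

end RingHom

theorem RingHom.continuous_of_continuous_comp_algebraMap {K E F : Type*}
    [NontriviallyNormedField K] [CompleteSpace K]
    [Ring E] [TopologicalSpace E] [IsTopologicalAddGroup E] [T2Space E]
    [Algebra K E] [ContinuousSMul K E] [FiniteDimensional K E]
    [CommRing F] [TopologicalSpace F] [IsTopologicalRing F]
    (φ : E →+* F) (h : Continuous (φ.comp (algebraMap K E))) : Continuous φ := by
  let _ : Algebra K F := (φ.comp (algebraMap K E)).toAlgebra
  have : ContinuousSMul K F := continuousSMul_of_algebraMap K F h
  let φₐ : E →ₐ[K] F := { φ with commutes' := fun _ => rfl }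
  exact φₐ.toLinearMap.continuous_of_finiteDimensional

abbrev NormedAlgebra.ofNormAlgebraMap {K E : Type*} [NormedField K] [NormedField E] [Algebra K E]
    (h : ∀ x : K, ‖algebraMap K E x‖ = ‖x‖) : NormedAlgebra K E where
  norm_smul_le c x := by rw [Algebra.smul_def, norm_mul, h]

theorem Padic.continuous_ringHom_of_finiteDimensional {p : ℕ} [Fact p.Prime] {E F : Type*}
    [NormedField E] [NormedField F] [Algebra ℚ_[p] E] [Algebra ℚ_[p] F]
    (hE : ∀ x : ℚ_[p], ‖algebraMap ℚ_[p] E x‖ = ‖x‖)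
    (hF : ∀ x : ℚ_[p], ‖algebraMap ℚ_[p] F x‖ = ‖x‖)
    [FiniteDimensional ℚ_[p] E] [FiniteDimensional ℚ_[p] F] (φ : E →+* F) : Continuous φ := by
  let _ := NormedAlgebra.ofNormAlgebraMap hE
  let _ := NormedAlgebra.ofNormAlgebraMap hF
  have : ProperSpace F := FiniteDimensional.proper ℚ_[p] F
  have : IsUltrametricDist F := IsUltrametricDist.of_normedAlgebra ℚ_[p]
  refine φ.continuous_of_continuous_comp_algebraMap (K := ℚ_[p])
    (AddMonoidHomClass.isometry_of_norm _ (Padic.norm_ringHom_apply _ ?_)).continuous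
  rw [← map_natCast (algebraMap ℚ_[p] F), hF]

theorem padic_field_ring_iso_is_homeomorphism_general (p : ℕ) [Fact p.Prime]
    (E E' : Type*) [NormedField E] [NormedField E']
    [Algebra ℚ_[p] E] [Algebra ℚ_[p] E']
    (hE : ∀ x : ℚ_[p], ‖algebraMap ℚ_[p] E x‖ = ‖x‖)
    (hE' : ∀ x : ℚ_[p], ‖algebraMap ℚ_[p] E' x‖ = ‖x‖)
    [FiniteDimensional ℚ_[p] E] [FiniteDimensional ℚ_[p] E']
    (φ : E ≃+* E') :
    Continuous φ ∧ Continuous φ.symm :=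
  ⟨Padic.continuous_ringHom_of_finiteDimensional hE hE' φ.toRingHom,
    Padic.continuous_ringHom_of_finiteDimensional hE' hE φ.symm.toRingHom⟩

/-- Every ring isomorphism between two `p`-adic fields is automatically a homeomorphism:
if `E`, `E'` are finite extensions of `ℚ_p`, each equipped (as a normed field) with the topology
induced by its (unique) norm extending the `p`-adic norm of `ℚ_p`, with respect to which it is
complete, then any ring isomorphism `φ : E ≃+* E'` is continuous, and hence a homeomorphism
(its inverse is continuous as well). -/
theorem padic_field_ring_iso_is_homeomorphism (p : ℕ) [Fact p.Prime]
    (E E' : Type*) [NormedField E] [NormedField E']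
    [Algebra ℚ_[p] E] [Algebra ℚ_[p] E']
    (hE : ∀ x : ℚ_[p], ‖algebraMap ℚ_[p] E x‖ = ‖x‖)
    (hE' : ∀ x : ℚ_[p], ‖algebraMap ℚ_[p] E' x‖ = ‖x‖)
    [FiniteDimensional ℚ_[p] E] [FiniteDimensional ℚ_[p] E']
    [CompleteSpace E] [CompleteSpace E']
    (φ : E ≃+* E') :
    Continuous φ ∧ Continuous φ.symm :=
  padic_field_ring_iso_is_homeomorphism_general p E E' hE hE' φ
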